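/- Let N ≥ 1 and Q ≥ 1 be integers. Let M₁, …, M_Q : X → X be paracontractions with respect to ‖·‖_{2,2} with ⋂_{r=1}^Q fix(M_r) = C, and assume 𝒜 ∩ C ≠ ∅. Let W₁, …, W_Q be N×N doubly stochastic matrices with strictly positive diagonal entries such that the edge set {(i,j) | (W_Q ⬝ W_{Q−1} ⬝ ⋯ ⬝ W₁)_{ij} > 0} of the matrix product is strongly connected on Fin N. Let 𝑾_r denote the averaging map of W_r on X. Then the composed map x ↦ (M_Q ∘ 𝑾_Q ∘ ⋯ ∘ M₁ ∘ 𝑾₁)(x) : (i) is a paracontraction with respect to ‖·‖_{2,2}, and (ii) satisfies fix(M_Q ∘ 𝑾_Q ∘ ⋯ ∘ M₁ ∘ 𝑾₁) = 𝒜 ∩ C. -/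

import Mathlib

open scoped BigOperators

noncomputable section

/-- The stacked space `X = Fin N → EuclideanSpace ℝ (Fin N)` with the ℓ²-product norm. -/
abbrev XSp (N : ℕ) := PiLp 2 (fun _ : Fin N => EuclideanSpace ℝ (Fin N))

/-- The core of a TU coalitional game with value function `v`. -/
def core {N : ℕ} (v : Finset (Fin N) → ℝ) : Set (EuclideanSpace ℝ (Fin N)) :=
  {x | ∑ i, x i = v Finset.univ ∧
    ∀ S : Finset (Fin N), S.Nonempty → ∑ i ∈ S, x i ≥ v S}

/-- A matrix is doubly stochastic: nonnegative entries, rows and columns sum to 1. -/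
def DoublyStochastic {N : ℕ} (W : Matrix (Fin N) (Fin N) ℝ) : Prop :=
  (∀ i j, 0 ≤ W i j) ∧ (∀ i, ∑ j, W i j = 1) ∧ (∀ j, ∑ i, W i j = 1)

/-- The averaging map `(𝑾 x)_i = ∑ j, W i j • x j` (Kronecker product `W ⊗ I`). -/
def avgMap {N n : ℕ} (W : Matrix (Fin N) (Fin N) ℝ)
    (x : PiLp 2 fun _ : Fin N => EuclideanSpace ℝ (Fin n)) :
    PiLp 2 fun _ : Fin N => EuclideanSpace ℝ (Fin n) :=
  WithLp.toLp 2 (fun i => ∑ j, W i j • x j)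

/-- An edge set on `Fin N` is strongly connected. -/
def StronglyConnected {N : ℕ} (E : Set (Fin N × Fin N)) : Prop :=
  ∀ i j : Fin N, Relation.ReflTransGen (fun a b => (a, b) ∈ E) i j

/-- A map is nonexpansive (1-Lipschitz). -/
def Nonexpansive {E : Type*} [NormedAddCommGroup E] (T : E → E) : Prop :=
  ∀ x y, ‖T x - T y‖ ≤ ‖x - y‖

/-- A continuous map `M` is a paracontraction if `‖M x - y‖ < ‖x - y‖` whenever
`x` is not a fixed point of `M` and `y` is a fixed point of `M`. -/
def Paracontraction {E : Type*} [NormedAddCommGroup E] (M : E → E) : Prop :=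
  Continuous M ∧ ∀ x y, M x ≠ x → M y = y → ‖M x - y‖ < ‖x - y‖

/-!
Fix `y ∈ 𝒜 ∩ C`. Every stage `M_r ∘ 𝑾_r` fixes `y` and moves each of its non-fixed points
strictly closer to `y`: for `𝑾_r` this follows from the identity
`‖z‖² - ‖𝑾 z‖² = ∑ᵢ ∑ⱼ Wᵢⱼ ‖zⱼ - (𝑾 z)ᵢ‖²` and the positive diagonal. This property survives
composition, and a fixed point of such a composition is fixed by every factor. So a fixed point
`x` of the composed map lies in `C` and is fixed by the product `P` of the `W_r`; by the same
identity for `P`, `xᵢ = xⱼ` whenever `Pᵢⱼ > 0`, and strong connectivity makes `x` a consensus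
point. With the fixed-point set identified as `𝒜 ∩ C`, the pointwise property at its points is
exactly the paracontraction inequality.
-/

open Function

/-- Unlike `Paracontraction`, this one-point version is stable under composition. -/
def ParacontractiveAt {X : Type*} [PseudoMetricSpace X] (T : X → X) (y : X) : Prop :=
  IsFixedPt T y ∧ ∀ x, ¬IsFixedPt T x → dist (T x) y < dist x y

namespace ParacontractiveAt

variable {X : Type*} [PseudoMetricSpace X] {f g : X → X} {x y : X}

lemma dist_le (hf : ParacontractiveAt f y) (x : X) : dist (f x) y ≤ dist x y := by
  by_cases hx : IsFixedPt f x
  · rw [hx.eq]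
  · exact (hf.2 x hx).le

lemma comp (hf : ParacontractiveAt f y) (hg : ParacontractiveAt g y) :
    ParacontractiveAt (f ∘ g) y := by
  refine ⟨hf.1.comp hg.1, fun x hx => ?_⟩
  by_cases hgx : IsFixedPt g x
  · have hfx : ¬IsFixedPt f x := fun hfx => hx (hfx.comp hgx)
    simpa [hgx.eq] using hf.2 x hfx
  · exact (hf.dist_le (g x)).trans_lt (hg.2 x hgx)

lemma isFixedPt_comp_iff (hf : ParacontractiveAt f y) (hg : ParacontractiveAt g y) :
    IsFixedPt (f ∘ g) x ↔ IsFixedPt f x ∧ IsFixedPt g x := by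
  refine ⟨fun hx => ?_, fun hx => hx.1.comp hx.2⟩
  have hgx : IsFixedPt g x := by
    by_contra hgx
    have hlt := (hf.dist_le (g x)).trans_lt (hg.2 x hgx)
    rw [show f (g x) = x from hx] at hlt
    exact hlt.false
  exact ⟨by simpa [IsFixedPt, hgx.eq] using hx, hgx⟩

lemma list_foldr_comp {L : List (X → X)} (hL : ∀ T ∈ L, ParacontractiveAt T y) :
    ParacontractiveAt (L.foldr (· ∘ ·) id) y := by
  induction L with
  | nil => exact ⟨rfl, fun x hx => absurd rfl hx⟩
  | cons T L ih =>
    exact (hL T List.mem_cons_self).comp (ih fun S hS => hL S (List.mem_cons_of_mem T hS))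

lemma isFixedPt_list_foldr_comp_iff {L : List (X → X)} (hL : ∀ T ∈ L, ParacontractiveAt T y) :
    IsFixedPt (L.foldr (· ∘ ·) id) x ↔ ∀ T ∈ L, IsFixedPt T x := by
  induction L with
  | nil => simp [IsFixedPt]
  | cons T L ih =>
    have hL' : ∀ S ∈ L, ParacontractiveAt S y := fun S hS => hL S (List.mem_cons_of_mem T hS)
    rw [List.foldr_cons, (hL T List.mem_cons_self).isFixedPt_comp_iff (list_foldr_comp hL'),
      ih hL', List.forall_mem_cons]

end ParacontractiveAt

lemma Paracontraction.paracontractiveAt {E : Type*} [NormedAddCommGroup E] {M : E → E}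
    (hM : Paracontraction M) {y : E} (hy : IsFixedPt M y) : ParacontractiveAt M y :=
  ⟨hy, fun x hx => by simpa only [dist_eq_norm] using hM.2 x y hx hy⟩

lemma continuous_list_foldr_comp {X : Type*} [TopologicalSpace X] {L : List (X → X)}
    (hL : ∀ T ∈ L, Continuous T) : Continuous (L.foldr (· ∘ ·) id) := by
  induction L with
  | nil => exact continuous_id
  | cons T L ih =>
    exact (hL T List.mem_cons_self).comp (ih fun S hS => hL S (List.mem_cons_of_mem T hS))

lemma paracontraction_list_foldr_comp {E : Type*} [NormedAddCommGroup E] {L : List (E → E)}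
    (hcont : ∀ T ∈ L, Continuous T) {S : Set E} (hS : ∀ y ∈ S, ∀ T ∈ L, ParacontractiveAt T y)
    (hfix : fixedPoints (L.foldr (· ∘ ·) id) = S) : Paracontraction (L.foldr (· ∘ ·) id) :=
  ⟨continuous_list_foldr_comp hcont, fun x y hx hy => by
    simpa only [dist_eq_norm] using (ParacontractiveAt.list_foldr_comp (hS y (hfix ▸ hy))).2 x hx⟩

lemma sum_mul_norm_sub_sum_smul_sq {ι E : Type*} [NormedAddCommGroup E] [InnerProductSpace ℝ E]
    (s : Finset ι) (w : ι → ℝ) (z : ι → E) (hw : ∑ j ∈ s, w j = 1) :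
    ∑ j ∈ s, w j * ‖z j - ∑ k ∈ s, w k • z k‖ ^ 2
      = ∑ j ∈ s, w j * ‖z j‖ ^ 2 - ‖∑ k ∈ s, w k • z k‖ ^ 2 := by
  set m := ∑ k ∈ s, w k • z k
  have hm : ∑ j ∈ s, w j * inner ℝ (z j) m = ‖m‖ ^ 2 := by
    simp only [← real_inner_smul_left, ← sum_inner, real_inner_self_eq_norm_sq, m]
  calc ∑ j ∈ s, w j * ‖z j - m‖ ^ 2
      = ∑ j ∈ s, w j * ‖z j‖ ^ 2 - 2 * ∑ j ∈ s, w j * inner ℝ (z j) m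
          + (∑ j ∈ s, w j) * ‖m‖ ^ 2 := by
        simp only [norm_sub_sq_real, Finset.mul_sum, Finset.sum_mul, ← Finset.sum_sub_distrib,
          ← Finset.sum_add_distrib]
        exact Finset.sum_congr rfl fun j _ => by ring
    _ = ∑ j ∈ s, w j * ‖z j‖ ^ 2 - ‖m‖ ^ 2 := by rw [hm, hw]; ring

section avgMap

variable {N n : ℕ} (W : Matrix (Fin N) (Fin N) ℝ)
  (x y z : PiLp 2 fun _ : Fin N => EuclideanSpace ℝ (Fin n))

lemma avgMap_apply (i : Fin N) : avgMap W x i = ∑ j, W i j • x j := rfl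

lemma avgMap_sub : avgMap W (x - y) = avgMap W x - avgMap W y := by
  ext1 i
  simp only [avgMap_apply, PiLp.sub_apply, smul_sub, Finset.sum_sub_distrib]

lemma avgMap_one : avgMap 1 x = x := by
  ext1 i
  simp [avgMap_apply, Matrix.one_apply, ite_smul]

lemma avgMap_mul (A B : Matrix (Fin N) (Fin N) ℝ) : avgMap (A * B) x = avgMap A (avgMap B x) := by
  ext1 i
  simp only [avgMap_apply, Matrix.mul_apply, Finset.sum_smul, Finset.smul_sum, smul_smul]
  exact Finset.sum_comm

lemma continuous_avgMap : Continuous (avgMap (n := n) W) := by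
  unfold avgMap
  fun_prop

variable {W x y z}

lemma avgMap_eq_self_of_forall_eq (hrow : ∀ i, ∑ j, W i j = 1) (hx : ∀ i j, x i = x j) :
    avgMap W x = x := by
  ext1 i
  simp only [avgMap_apply, hx _ i, ← Finset.sum_smul, hrow i, one_smul]

lemma norm_sq_sub_norm_avgMap_sq (hrow : ∀ i, ∑ j, W i j = 1) (hcol : ∀ j, ∑ i, W i j = 1) :
    ‖z‖ ^ 2 - ‖avgMap W z‖ ^ 2 = ∑ i, ∑ j, W i j * ‖z j - avgMap W z i‖ ^ 2 := by
  calc ‖z‖ ^ 2 - ‖avgMap W z‖ ^ 2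
      = ∑ i, (∑ j, W i j * ‖z j‖ ^ 2 - ‖avgMap W z i‖ ^ 2) := by
        rw [PiLp.norm_sq_eq_of_L2, PiLp.norm_sq_eq_of_L2, Finset.sum_sub_distrib, Finset.sum_comm]
        simp only [← Finset.sum_mul, hcol, one_mul]
    _ = ∑ i, ∑ j, W i j * ‖z j - avgMap W z i‖ ^ 2 := by
        simp only [avgMap_apply, sum_mul_norm_sub_sum_smul_sq _ _ _ (hrow _)]

lemma norm_avgMap_le (hW : DoublyStochastic W) : ‖avgMap W z‖ ≤ ‖z‖ := by
  obtain ⟨hnonneg, hrow, hcol⟩ := hW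
  have hgap : 0 ≤ ‖z‖ ^ 2 - ‖avgMap W z‖ ^ 2 := by
    rw [norm_sq_sub_norm_avgMap_sq hrow hcol]
    exact Finset.sum_nonneg fun i _ => Finset.sum_nonneg fun j _ =>
      mul_nonneg (hnonneg i j) (sq_nonneg _)
  exact le_of_pow_le_pow_left₀ two_ne_zero (norm_nonneg z) (sub_nonneg.1 hgap)

lemma eq_avgMap_apply_of_norm_eq (hW : DoublyStochastic W) (h : ‖avgMap W z‖ = ‖z‖) {i j : Fin N}
    (hij : 0 < W i j) : z j = avgMap W z i := by
  obtain ⟨hnonneg, hrow, hcol⟩ := hW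
  have hterm_nonneg : ∀ i j, 0 ≤ W i j * ‖z j - avgMap W z i‖ ^ 2 :=
    fun i j => mul_nonneg (hnonneg i j) (sq_nonneg _)
  have hsum : ∑ i, ∑ j, W i j * ‖z j - avgMap W z i‖ ^ 2 = 0 := by
    rw [← norm_sq_sub_norm_avgMap_sq hrow hcol, h, sub_self]
  have hrow_zero := (Finset.sum_eq_zero_iff_of_nonneg fun i _ =>
    Finset.sum_nonneg fun j _ => hterm_nonneg i j).1 hsum i (Finset.mem_univ i)
  have hterm := (Finset.sum_eq_zero_iff_of_nonneg fun j _ => hterm_nonneg i j).1 hrow_zero j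
    (Finset.mem_univ j)
  simpa [hij.ne', sub_eq_zero] using hterm

lemma paracontractiveAt_avgMap (hW : DoublyStochastic W) (hdiag : ∀ i, 0 < W i i)
    (hy : ∀ i j, y i = y j) : ParacontractiveAt (avgMap W) y := by
  have hfix : avgMap W y = y := avgMap_eq_self_of_forall_eq hW.2.1 hy
  have hshift : ∀ z, avgMap W z - y = avgMap W (z - y) := fun z => by rw [avgMap_sub, hfix]
  refine ⟨hfix, fun z hz => ?_⟩
  rw [dist_eq_norm, dist_eq_norm, hshift]
  refine (norm_avgMap_le hW).lt_of_ne fun h => hz ?_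
  have hfix_sub : avgMap W (z - y) = z - y := by
    ext1 i
    exact (eq_avgMap_apply_of_norm_eq hW h (hdiag i)).symm
  rwa [← hshift, sub_left_inj] at hfix_sub

lemma isFixedPt_avgMap_list_prod {L : List (Matrix (Fin N) (Fin N) ℝ)}
    (hL : ∀ A ∈ L, IsFixedPt (avgMap A) x) : IsFixedPt (avgMap L.prod) x := by
  induction L with
  | nil => exact avgMap_one x
  | cons A L ih =>
    rw [IsFixedPt, List.prod_cons, avgMap_mul, ih fun B hB => hL B (List.mem_cons_of_mem A hB)]
    exact hL A List.mem_cons_self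

lemma forall_eq_of_isFixedPt_avgMap (hW : DoublyStochastic W)
    (hconn : StronglyConnected {p : Fin N × Fin N | 0 < W p.1 p.2})
    (hx : IsFixedPt (avgMap W) x) (i j : Fin N) : x i = x j := by
  have hedge : ∀ a b, 0 < W a b → x a = x b := fun a b hab => by
    simpa [hx.eq] using (eq_avgMap_apply_of_norm_eq hW (congrArg norm hx.eq) hab).symm
  induction hconn i j with
  | refl => rfl
  | tail _ hbc ih => exact ih.trans (hedge _ _ hbc)

end avgMap

lemma doublyStochastic_list_prod {N : ℕ} {L : List (Matrix (Fin N) (Fin N) ℝ)}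
    (hL : ∀ A ∈ L, DoublyStochastic A) : DoublyStochastic L.prod :=
  mem_doublyStochastic_iff_sum.1 <| Submonoid.list_prod_mem _ fun A hA =>
    mem_doublyStochastic_iff_sum.2 (hL A hA)

theorem composed_bargaining_map_paracontraction_general
    (N Q : ℕ)
    (M : Fin Q → (XSp N → XSp N)) (hM : ∀ r, Paracontraction (M r))
    (C : Set (XSp N)) (hC : (⋂ r, Function.fixedPoints (M r)) = C)
    (𝒜 : Set (XSp N)) (h𝒜 : 𝒜 = {x : XSp N | ∀ i j, x i = x j})
    (hne : (𝒜 ∩ C).Nonempty)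
    (W : Fin Q → Matrix (Fin N) (Fin N) ℝ)
    (hW : ∀ r, DoublyStochastic (W r) ∧ ∀ i, 0 < W r i i)
    (hconn : StronglyConnected {p : Fin N × Fin N |
      0 < ((List.ofFn fun r : Fin Q => W (Fin.rev r)).prod) p.1 p.2})
    (F : XSp N → XSp N)
    (hF : F = (List.ofFn fun r : Fin Q => (M r) ∘ avgMap (W r)).foldl
      (fun g f => f ∘ g) id) :
    Paracontraction F ∧ Function.fixedPoints F = 𝒜 ∩ C := by
  subst hC h𝒜 hF
  rw [List.foldl_eq_foldr_reverse]
  set S := {x : XSp N | ∀ i j, x i = x j} ∩ ⋂ r, fixedPoints (M r) with hS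
  have hMy : ∀ y ∈ S, ∀ r, ParacontractiveAt (M r) y := fun y hy r =>
    (hM r).paracontractiveAt (Set.mem_iInter.1 hy.2 r)
  have hWy : ∀ y ∈ S, ∀ r, ParacontractiveAt (avgMap (W r)) y := fun y hy r =>
    paracontractiveAt_avgMap (hW r).1 (hW r).2 hy.1
  have hstage : ∀ y ∈ S, ∀ T ∈ (List.ofFn fun r => M r ∘ avgMap (W r)).reverse,
      ParacontractiveAt T y := by
    intro y hy T hT
    obtain ⟨r, rfl⟩ := List.mem_ofFn.1 (List.mem_reverse.1 hT)
    exact (hMy y hy r).comp (hWy y hy r)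
  obtain ⟨y₀, hy₀⟩ := hne
  have hfixed : fixedPoints ((List.ofFn fun r => M r ∘ avgMap (W r)).reverse.foldr (· ∘ ·) id)
      = S := by
    ext x
    simp only [mem_fixedPoints, ParacontractiveAt.isFixedPt_list_foldr_comp_iff (hstage y₀ hy₀),
      List.mem_reverse, List.forall_mem_ofFn_iff,
      ParacontractiveAt.isFixedPt_comp_iff (hMy y₀ hy₀ _) (hWy y₀ hy₀ _), forall_and, hS,
      Set.mem_inter_iff, Set.mem_iInter, Set.mem_ofPred_eq]
    rw [and_comm]
    refine and_congr_left fun _ => ⟨fun havg => ?_, fun hcons r =>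
      avgMap_eq_self_of_forall_eq (hW r).1.2.1 hcons⟩
    exact forall_eq_of_isFixedPt_avgMap
      (doublyStochastic_list_prod (List.forall_mem_ofFn_iff.2 fun r => (hW _).1)) hconn
      (isFixedPt_avgMap_list_prod (List.forall_mem_ofFn_iff.2 fun r => havg _))
  refine ⟨paracontraction_list_foldr_comp (fun T hT => ?_) hstage hfixed, hfixed⟩
  obtain ⟨r, rfl⟩ := List.mem_ofFn.1 (List.mem_reverse.1 hT)
  exact (hM r).1.comp (continuous_avgMap (W r))

/-- Lemma 7: the composition `M_Q ∘ 𝑾_Q ∘ ⋯ ∘ M₁ ∘ 𝑾₁` is a paracontraction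
w.r.t. `‖·‖_{2,2}` and its fixed-point set is `𝒜 ∩ C`. -/
theorem composed_bargaining_map_paracontraction
    (N Q : ℕ) (hN : 1 ≤ N) (hQ : 1 ≤ Q)
    (M : Fin Q → (XSp N → XSp N)) (hM : ∀ r, Paracontraction (M r))
    (C : Set (XSp N)) (hC : (⋂ r, Function.fixedPoints (M r)) = C)
    (𝒜 : Set (XSp N)) (h𝒜 : 𝒜 = {x : XSp N | ∀ i j, x i = x j})
    (hne : (𝒜 ∩ C).Nonempty)
    (W : Fin Q → Matrix (Fin N) (Fin N) ℝ)
    (hW : ∀ r, DoublyStochastic (W r) ∧ ∀ i, 0 < W r i i)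
    (hconn : StronglyConnected {p : Fin N × Fin N |
      0 < ((List.ofFn fun r : Fin Q => W (Fin.rev r)).prod) p.1 p.2})
    (F : XSp N → XSp N)
    (hF : F = (List.ofFn fun r : Fin Q => (M r) ∘ avgMap (W r)).foldl
      (fun g f => f ∘ g) id) :
    Paracontraction F ∧ Function.fixedPoints F = 𝒜 ∩ C :=
  composed_bargaining_map_paracontraction_general N Q M hM C hC 𝒜 h𝒜 hne W hW hconn F hF
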